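/- arXiv:1903.09238 — 2 statements merged into one kernel-verified Lean document; each statement's English description precedes it below -/
import Mathlib

section
/- For strings x and y with |y| ≥ |x| ≥ 0 and |y| > 0, the Normalized Levenshtein Distance satisfies 1 − |x|/|y| ≤ NLD(x,y) ≤ 2/(|x|/|y| + 2). -/
variable {α : Type*} [Fintype α] [DecidableEq α]

/-- Cost structure for edit distance (was `Levenshtein.Cost` in Mathlib, since removed). -/
structure Levenshtein.Cost (α' β' δ : Type*) where
  delete : α' → δ
  insert : β' → δ
  substitute : α' → β' → δ

/-- Default unit costs (was `Levenshtein.defaultCost` in Mathlib, since removed). -/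
def Levenshtein.defaultCost {γ : Type*} [DecidableEq γ] : Levenshtein.Cost γ γ ℕ where
  delete _ := 1
  insert _ := 1
  substitute a b := if a = b then 0 else 1

/-- Levenshtein distance with cost `C` (was `levenshtein` in Mathlib, since removed);
given by the recursion Mathlib proved for it. -/
def levenshtein {α' β' δ : Type*} [AddZeroClass δ] [Min δ] (C : Levenshtein.Cost α' β' δ) :
    List α' → List β' → δ
  | [], ys => (ys.map C.insert).sum
  | x :: xs, [] => ((x :: xs).map C.delete).sum
  | x :: xs, y :: ys =>
    min (C.delete x + levenshtein C xs (y :: ys))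
      (min (C.insert y + levenshtein C (x :: xs) ys) (C.substitute x y + levenshtein C xs ys))

/-- Levenshtein distance: the minimum number of single-character insertions,
deletions, and substitutions transforming one string into another. -/
def LD (x y : List α) : ℕ := levenshtein Levenshtein.defaultCost x y

/-- Normalized Levenshtein distance. -/
noncomputable def NLD (x y : List α) : ℝ :=
  2 * LD x y / (x.length + y.length + LD x y)

/-!
Since `LD x y` lies between `|y| - |x|` and `|y|`, and `L ↦ 2L / (|x| + |y| + L)` is increasing,
`NLD x y` lies between the values at these endpoints, `1 - |x|/|y|` and `2 / (|x|/|y| + 2)`.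
-/

section EditDistance

variable {β : Type*} [DecidableEq β]

@[simp]
lemma LD_nil_left (y : List β) : LD [] y = y.length := by
  simp [LD, levenshtein, Levenshtein.defaultCost]

@[simp]
lemma LD_nil_right (x : List β) : LD x [] = x.length := by
  cases x <;> simp [LD, levenshtein, Levenshtein.defaultCost, add_comm]

lemma LD_cons_cons (a b : β) (xs ys : List β) :
    LD (a :: xs) (b :: ys) =
      min (1 + LD xs (b :: ys)) (min (1 + LD (a :: xs) ys) ((if a = b then 0 else 1) + LD xs ys)) := by
  simp only [LD, levenshtein, Levenshtein.defaultCost]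

lemma LD_le_max_length : ∀ x y : List β, LD x y ≤ max x.length y.length
  | [], y => by simp
  | _ :: _, [] => by simp
  | a :: xs, b :: ys => by
    have := LD_le_max_length xs ys
    rw [LD_cons_cons]
    simp only [List.length_cons]
    split <;> omega

lemma length_le_length_add_LD : ∀ x y : List β, y.length ≤ x.length + LD x y
  | [], y => by simp
  | _ :: _, [] => by simp
  | a :: xs, b :: ys => by
    have := length_le_length_add_LD xs (b :: ys)
    have := length_le_length_add_LD (a :: xs) ys
    have := length_le_length_add_LD xs ys
    rw [LD_cons_cons]
    simp only [List.length_cons] at *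
    split <;> omega

end EditDistance

lemma one_sub_div_le_two_mul_div_of_sub_le {n m L : ℝ} (hn : 0 ≤ n) (hm : 0 < m)
    (hL : m - n ≤ L) : 1 - n / m ≤ 2 * L / (n + m + L) := by
  rw [one_sub_div hm.ne', div_le_div_iff₀ hm (by linarith)]
  nlinarith

lemma two_mul_div_le_two_div_div_add_two {n m L : ℝ} (hn : 0 ≤ n) (hm : 0 < m) (hL₀ : 0 ≤ L)
    (hL : L ≤ m) : 2 * L / (n + m + L) ≤ 2 / (n / m + 2) := by
  rw [div_add' _ _ _ hm.ne', div_div_eq_mul_div, div_le_div_iff₀ (by linarith) (by linarith)]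
  nlinarith

theorem NLD_bounds (x y : List α) (h : x.length ≤ y.length) (hy : 0 < y.length) :
    1 - (x.length : ℝ) / y.length ≤ NLD x y ∧
    NLD x y ≤ 2 / ((x.length : ℝ) / y.length + 2) := by
  have hm : (0 : ℝ) < y.length := by exact_mod_cast hy
  have hLD_le : (LD x y : ℝ) ≤ y.length := by
    exact_mod_cast (LD_le_max_length x y).trans_eq (max_eq_right h)
  have hLD_ge : (y.length : ℝ) - x.length ≤ LD x y := by
    have : (y.length : ℝ) ≤ x.length + LD x y := by exact_mod_cast length_le_length_add_LD x y
    linarith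
  exact ⟨one_sub_div_le_two_mul_div_of_sub_le (by positivity) hm hLD_ge,
    two_mul_div_le_two_div_div_add_two (by positivity) hm (by positivity) hLD_le⟩
end

section
/- Abstract triangle-inequality transfer lemma for NSLD: let a = NSLD(X,Y), b = NSLD(Y,Z), c = NSLD(X,Z) be reals in [0,1) with a < c and b < c, and let Lx, Ly, Lz > 0 be reals satisfying (a/(2−a))·(Lx+Ly) + (b/(2−b))·(Ly+Lz) ≥ (c/(2−c))·(Lx+Lz), Lx ≥ (1−a)·Ly, and Lz ≥ (1−b)·Ly. Then a + b ≥ c. -/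
/-!
Write `f t = t / (2 - t)`. Subtracting the right-hand side of the triangle hypothesis from its
left-hand side and substituting `Lx = (1 - a) Ly + u`, `Lz = (1 - b) Ly + v` leaves
`(f c - f a) u + (f c - f b) v + 2 (c - a - b) Ly / (2 - c)`, because `f t (2 - t) = t`.
The first two terms are nonnegative since `f` is increasing below `2`, so `c - a - b ≤ 0`.
-/

noncomputable def sldOfNsld (t : ℝ) : ℝ := t / (2 - t)

theorem sldOfNsld_le_sldOfNsld {s t : ℝ} (hst : s ≤ t) (ht : t < 2) :
    sldOfNsld s ≤ sldOfNsld t := by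
  unfold sldOfNsld
  rw [div_le_div_iff₀ (by linarith) (by linarith)]
  nlinarith

theorem sldOfNsld_triangle_defect {a b c : ℝ} (ha : a ≠ 2) (hb : b ≠ 2) (hc : c ≠ 2)
    (x y z : ℝ) :
    sldOfNsld c * (x + z) - sldOfNsld a * (x + y) - sldOfNsld b * (y + z) =
      (sldOfNsld c - sldOfNsld a) * (x - (1 - a) * y) +
        (sldOfNsld c - sldOfNsld b) * (z - (1 - b) * y) +
        (c - a - b) * (2 * y / (2 - c)) := by
  unfold sldOfNsld
  have ha' : 2 - a ≠ 0 := sub_ne_zero.2 (Ne.symm ha)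
  have hb' : 2 - b ≠ 0 := sub_ne_zero.2 (Ne.symm hb)
  have hc' : 2 - c ≠ 0 := sub_ne_zero.2 (Ne.symm hc)
  field_simp
  ring

theorem nsld_triangle_core_general (a b c Lx Ly Lz : ℝ)
    (hc : c ∈ Set.Ico (0 : ℝ) 1)
    (hac : a < c) (hbc : b < c)
    (hLy : 0 < Ly)
    (htri : a / (2 - a) * (Lx + Ly) + b / (2 - b) * (Ly + Lz) ≥
      c / (2 - c) * (Lx + Lz))
    (hx : Lx ≥ (1 - a) * Ly) (hz : Lz ≥ (1 - b) * Ly) :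
    a + b ≥ c := by
  have hc2 : c < 2 := by linarith [hc.2]
  have hdefect := sldOfNsld_triangle_defect (a := a) (b := b) (c := c)
    (by linarith) (by linarith) hc2.ne Lx Ly Lz
  have hu : 0 ≤ (sldOfNsld c - sldOfNsld a) * (Lx - (1 - a) * Ly) :=
    mul_nonneg (sub_nonneg.2 (sldOfNsld_le_sldOfNsld hac.le hc2)) (sub_nonneg.2 hx)
  have hv : 0 ≤ (sldOfNsld c - sldOfNsld b) * (Lz - (1 - b) * Ly) :=
    mul_nonneg (sub_nonneg.2 (sldOfNsld_le_sldOfNsld hbc.le hc2)) (sub_nonneg.2 hz)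
  have hscale : 0 < 2 * Ly / (2 - c) := by
    have : 0 < 2 - c := by linarith
    positivity
  have hneg : (c - a - b) * (2 * Ly / (2 - c)) ≤ 0 := by
    unfold sldOfNsld at hdefect hu hv
    linarith
  linarith [nonpos_of_mul_nonpos_left hneg hscale]

theorem nsld_triangle_core (a b c Lx Ly Lz : ℝ)
    (ha : a ∈ Set.Ico (0 : ℝ) 1) (hb : b ∈ Set.Ico (0 : ℝ) 1)
    (hc : c ∈ Set.Ico (0 : ℝ) 1)
    (hac : a < c) (hbc : b < c)
    (hLx : 0 < Lx) (hLy : 0 < Ly) (hLz : 0 < Lz)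
    (htri : a / (2 - a) * (Lx + Ly) + b / (2 - b) * (Ly + Lz) ≥
      c / (2 - c) * (Lx + Lz))
    (hx : Lx ≥ (1 - a) * Ly) (hz : Lz ≥ (1 - b) * Ly) :
    a + b ≥ c :=
  nsld_triangle_core_general a b c Lx Ly Lz hc hac hbc hLy htri hx hz
end
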